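/- arXiv:2210.15361 — 4 statements merged into one kernel-verified Lean document; each statement's English description precedes it below -/
import Mathlib

section
/- For every integer n ≥ 4, the maximum size M_3(n,3) of a non-trivial 3-wise intersecting family of 3-element subsets of [n] equals 4. -/
/-- A family is 3-wise intersecting if any three (not necessarily distinct)
members have non-empty intersection. -/
def ThreeWiseIntersecting (F : Finset (Finset ℕ)) : Prop :=
  ∀ G₁ ∈ F, ∀ G₂ ∈ F, ∀ G₃ ∈ F, (G₁ ∩ G₂ ∩ G₃).Nonempty

/-- A family is non-trivial 3-wise intersecting if it is 3-wise intersecting and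
the intersection of all its members is empty. -/
def NontrivialThreeWiseIntersecting (F : Finset (Finset ℕ)) : Prop :=
  ThreeWiseIntersecting F ∧ ¬ ∃ x, ∀ A ∈ F, x ∈ A

/-- `M₃ n k` is the maximum size of a non-trivial 3-wise intersecting family of
`k`-element subsets of `[n] = {1,...,n}`. -/
noncomputable def M₃ (n k : ℕ) : ℕ :=
  sSup {m | ∃ F : Finset (Finset ℕ),
    (∀ A ∈ F, A ⊆ Finset.Icc 1 n ∧ A.card = k) ∧
    NontrivialThreeWiseIntersecting F ∧ F.card = m}

lemma pair_card {F : Finset (Finset ℕ)} (h3 : ∀ A ∈ F, A.card = 3)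
    (hI : ThreeWiseIntersecting F) (hnt : ∀ x, ∃ A ∈ F, x ∉ A)
    {A B : Finset ℕ} (hA : A ∈ F) (hB : B ∈ F) (hne : A ≠ B) :
    (A ∩ B).card = 2 := by
  have hsub : A ∩ B ⊆ A := Finset.inter_subset_left
  have hle : (A ∩ B).card ≤ 3 := by
    calc (A ∩ B).card ≤ A.card := Finset.card_le_card hsub
    _ = 3 := h3 A hA
  have hlt : (A ∩ B).card ≤ 2 := by
    by_contra h
    have h33 : (A ∩ B).card = 3 := by omega
    have : A ⊆ B := by
      have : A ∩ B = A := Finset.eq_of_subset_of_card_le hsub (by rw [h33, h3 A hA])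
      intro x hx
      rw [← this] at hx
      exact (Finset.mem_inter.mp hx).2
    exact hne (Finset.eq_of_subset_of_card_le this (by rw [h3 A hA, h3 B hB]))
  have hne2 : 2 ≤ (A ∩ B).card := by
    by_contra h
    have hnonempty : (A ∩ B).Nonempty := by
      have := hI A hA A hA B hB
      simpa using this
    have h1 : (A ∩ B).card = 1 := by
      have := Finset.card_pos.mpr hnonempty; omega
    obtain ⟨x, hx⟩ := Finset.card_eq_one.mp h1
    obtain ⟨C, hC, hxC⟩ := hnt x
    have := hI A hA B hB C hC
    rw [hx] at this
    obtain ⟨y, hy⟩ := this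
    simp only [Finset.mem_inter, Finset.mem_singleton] at hy
    exact hxC (hy.1 ▸ hy.2)
  omega

lemma card_le_four {F : Finset (Finset ℕ)} (h3 : ∀ A ∈ F, A.card = 3)
    (hI : ThreeWiseIntersecting F) (hnt : ∀ x, ∃ A ∈ F, x ∉ A) :
    F.card ≤ 4 := by
  by_cases hsmall : F.card ≤ 1
  · exact hsmall.trans (by norm_num)
  · obtain ⟨A, hA, B, hB, hne⟩ := (Finset.one_lt_card (s := F)).mp (by omega)
    have hAB : (A ∩ B).card = 2 := pair_card h3 hI hnt hA hB hne
    have hunion : (A ∪ B).card = 4 := by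
      have := Finset.card_union_add_card_inter A B
      have hA3 := h3 A hA; have hB3 := h3 B hB
      omega
    have hsub : ∀ C ∈ F, C ⊆ A ∪ B := by
      intro C hC
      by_contra hns
      obtain ⟨z, hzC, hzAB⟩ := Finset.not_subset.mp hns
      have hzA : z ∉ A := fun h => hzAB (Finset.mem_union_left _ h)
      have hzB : z ∉ B := fun h => hzAB (Finset.mem_union_right _ h)
      have hCA : C ≠ A := fun h => hzA (h ▸ hzC)
      have hCB : C ≠ B := fun h => hzB (h ▸ hzC)
      have hCA2 : (C ∩ A).card = 2 := pair_card h3 hI hnt hC hA hCA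
      have hCB2 : (C ∩ B).card = 2 := pair_card h3 hI hnt hC hB hCB
      have herz : (C.erase z).card = 2 := by
        rw [Finset.card_erase_of_mem hzC, h3 C hC]
      have hCAe : C ∩ A = C.erase z := by
        apply Finset.eq_of_subset_of_card_le
        · intro w hw
          simp only [Finset.mem_inter] at hw
          exact Finset.mem_erase.mpr ⟨fun h => hzA (h ▸ hw.2), hw.1⟩
        · omega
      have hCBe : C ∩ B = C.erase z := by
        apply Finset.eq_of_subset_of_card_le
        · intro w hw
          simp only [Finset.mem_inter] at hw
          exact Finset.mem_erase.mpr ⟨fun h => hzB (h ▸ hw.2), hw.1⟩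
        · omega
      have hABe : A ∩ B = C.erase z := by
        apply (Finset.eq_of_subset_of_card_le ?_ (by omega)).symm
        intro w hw
        refine Finset.mem_inter.mpr ⟨?_, ?_⟩
        · exact (Finset.mem_inter.mp (hCAe ▸ hw : w ∈ C ∩ A)).2
        · exact (Finset.mem_inter.mp (hCBe ▸ hw : w ∈ C ∩ B)).2
      obtain ⟨x, y, hxy, hxyeq⟩ := Finset.card_eq_two.mp hAB
      -- A ∩ B = {x, y}
      have hxA : x ∈ A := (Finset.mem_inter.mp (hxyeq ▸ (by simp : x ∈ ({x,y} : Finset ℕ)))).1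
      have hxB : x ∈ B := (Finset.mem_inter.mp (hxyeq ▸ (by simp : x ∈ ({x,y} : Finset ℕ)))).2
      have hyA : y ∈ A := (Finset.mem_inter.mp (hxyeq ▸ (by simp : y ∈ ({x,y} : Finset ℕ)))).1
      have hyB : y ∈ B := (Finset.mem_inter.mp (hxyeq ▸ (by simp : y ∈ ({x,y} : Finset ℕ)))).2
      have hCeq : C = {x, y, z} := by
        have h1 : C.erase z = {x, y} := by rw [← hABe, hxyeq]
        have : insert z (C.erase z) = C := Finset.insert_erase hzC
        rw [← this, h1]
        ext w; simp; tauto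
      -- get a ∈ A \ {x,y}, b ∈ B \ {x,y}
      obtain ⟨a, haA, ha⟩ : ∃ a ∈ A, a ∉ ({x, y} : Finset ℕ) := by
        by_contra h
        push_neg at h
        have : A ⊆ {x, y} := h
        have := Finset.card_le_card this
        rw [h3 A hA] at this
        have : ({x,y} : Finset ℕ).card ≤ 2 := Finset.card_insert_le _ _ |>.trans (by simp)
        omega
      obtain ⟨b, hbB, hb⟩ : ∃ b ∈ B, b ∉ ({x, y} : Finset ℕ) := by
        by_contra h
        push_neg at h
        have := Finset.card_le_card (h : B ⊆ {x,y})
        rw [h3 B hB] at this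
        have : ({x,y} : Finset ℕ).card ≤ 2 := Finset.card_insert_le _ _ |>.trans (by simp)
        omega
      simp only [Finset.mem_insert, Finset.mem_singleton] at ha hb
      push_neg at ha hb
      have hax : a ≠ x := ha.1
      have hay : a ≠ y := ha.2
      have hbx : b ≠ x := hb.1
      have hby : b ≠ y := hb.2
      have hab : a ≠ b := by
        intro h
        have : a ∈ A ∩ B := Finset.mem_inter.mpr ⟨haA, h ▸ hbB⟩
        rw [hxyeq] at this
        simp at this
        tauto
      have hAeq : A = {x, y, a} := by
        symm
        apply Finset.eq_of_subset_of_card_le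
        · intro w hw; simp at hw
          rcases hw with h|h|h
          · exact h ▸ hxA
          · exact h ▸ hyA
          · exact h ▸ haA
        · rw [h3 A hA]
          rw [Finset.card_insert_of_notMem (by simp [hxy, hax.symm]),
              Finset.card_insert_of_notMem (by simp [hay.symm])]
          simp
      have hBeq : B = {x, y, b} := by
        symm
        apply Finset.eq_of_subset_of_card_le
        · intro w hw; simp at hw
          rcases hw with h|h|h
          · exact h ▸ hxB
          · exact h ▸ hyB
          · exact h ▸ hbB
        · rw [h3 B hB]
          rw [Finset.card_insert_of_notMem (by simp [hxy, hbx.symm]),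
              Finset.card_insert_of_notMem (by simp [hby.symm])]
          simp
      have hzx : z ≠ x := fun h => hzA (h ▸ hxA)
      have hzy : z ≠ y := fun h => hzA (h ▸ hyA)
      have hza : z ≠ a := fun h => hzA (h ▸ haA)
      have hzb : z ≠ b := fun h => hzB (h ▸ hbB)
      obtain ⟨D, hD, hxD⟩ := hnt x
      obtain ⟨E, hE, hyE⟩ := hnt y
      -- y ∈ D
      have hyD : y ∈ D := by
        obtain ⟨w, hw⟩ := hI A hA B hB D hD
        simp only [Finset.mem_inter] at hw
        have : w ∈ A ∩ B := Finset.mem_inter.mpr ⟨hw.1.1, hw.1.2⟩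
        rw [hxyeq] at this
        simp at this
        rcases this with h|h
        · exact absurd (h ▸ hw.2) hxD
        · exact h ▸ hw.2
      -- x ∈ E
      have hxE : x ∈ E := by
        obtain ⟨w, hw⟩ := hI A hA B hB E hE
        simp only [Finset.mem_inter] at hw
        have : w ∈ A ∩ B := Finset.mem_inter.mpr ⟨hw.1.1, hw.1.2⟩
        rw [hxyeq] at this
        simp at this
        rcases this with h|h
        · exact h ▸ hw.2
        · exact absurd (h ▸ hw.2) hyE
      -- z ∈ D
      have hzD : z ∈ D := by
        obtain ⟨w, hw⟩ := hI C hC D hD E hE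
        simp only [Finset.mem_inter] at hw
        have hwC := hw.1.1
        rw [hCeq] at hwC
        simp at hwC
        rcases hwC with h|h|h
        · exact absurd (h ▸ hw.1.2) hxD
        · exact absurd (h ▸ hw.2) hyE
        · exact h ▸ hw.1.2
      -- a ∈ D
      have haD : a ∈ D := by
        obtain ⟨w, hw⟩ := hI A hA D hD E hE
        simp only [Finset.mem_inter] at hw
        have hwA := hw.1.1
        rw [hAeq] at hwA
        simp at hwA
        rcases hwA with h|h|h
        · exact absurd (h ▸ hw.1.2) hxD
        · exact absurd (h ▸ hw.2) hyE
        · exact h ▸ hw.1.2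
      -- b ∈ D
      have hbD : b ∈ D := by
        obtain ⟨w, hw⟩ := hI B hB D hD E hE
        simp only [Finset.mem_inter] at hw
        have hwB := hw.1.1
        rw [hBeq] at hwB
        simp at hwB
        rcases hwB with h|h|h
        · exact absurd (h ▸ hw.1.2) hxD
        · exact absurd (h ▸ hw.2) hyE
        · exact h ▸ hw.1.2
      -- D contains y, z, a, b all distinct: card ≥ 4 contradiction
      have hsubD : ({y, z, a, b} : Finset ℕ) ⊆ D := by
        intro w hw; simp at hw
        rcases hw with h|h|h|h
        · exact h ▸ hyD
        · exact h ▸ hzD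
        · exact h ▸ haD
        · exact h ▸ hbD
      have hcard4 : ({y, z, a, b} : Finset ℕ).card = 4 := by
        rw [Finset.card_insert_of_notMem (by simp; omega),
            Finset.card_insert_of_notMem (by simp; omega),
            Finset.card_insert_of_notMem (by simp; omega)]
        simp
      have := Finset.card_le_card hsubD
      rw [hcard4, h3 D hD] at this
      omega
    have : F ⊆ (A ∪ B).powersetCard 3 := by
      intro C hC
      rw [Finset.mem_powersetCard]
      exact ⟨hsub C hC, h3 C hC⟩
    have := Finset.card_le_card this
    rwa [Finset.card_powersetCard, hunion] at this

theorem M3_k_eq_three (n : ℕ) (hn : 4 ≤ n) : M₃ n 3 = 4 := by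
  set S := {m | ∃ F : Finset (Finset ℕ),
    (∀ A ∈ F, A ⊆ Finset.Icc 1 n ∧ A.card = 3) ∧
    NontrivialThreeWiseIntersecting F ∧ F.card = m} with hS
  have h4S : 4 ∈ S := by
    refine ⟨{{1,2,3},{1,2,4},{1,3,4},{2,3,4}}, ?_, ⟨?_, ?_⟩, by decide⟩
    · intro A hA
      fin_cases hA <;>
        exact ⟨by intro w hw; simp at hw; simp [Finset.mem_Icc]; omega, by decide⟩
    · show ThreeWiseIntersecting _
      unfold ThreeWiseIntersecting
      decide
    · rintro ⟨x, hx⟩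
      have h1 := hx {1,2,3} (by decide)
      have h2 := hx {1,2,4} (by decide)
      have h3 := hx {1,3,4} (by decide)
      have h4 := hx {2,3,4} (by decide)
      simp at h1 h2 h3 h4
      omega
  have hub : ∀ m ∈ S, m ≤ 4 := by
    rintro m ⟨F, hF, ⟨hI, hnt⟩, rfl⟩
    push_neg at hnt
    exact card_le_four (fun A hA => (hF A hA).2) hI hnt
  have hbdd : BddAbove S := ⟨4, fun m hm => hub m hm⟩
  exact le_antisymm (csSup_le ⟨4, h4S⟩ hub) (le_csSup hbdd h4S)
end

section
/- If k ≥ 4 and 2k ≤ n ≤ 3(k−1), then C(n−2, k−2) − C(n−k−1, k−2) + 2 < 4·C(n−4, k−3) + C(n−4, k−4); that is, |A(n,k)| < |B(n,k)|. -/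
theorem A_lt_B (n k : ℕ) (hk : 4 ≤ k) (h1 : 2 * k ≤ n) (h2 : n ≤ 3 * (k - 1)) :
    (n - 2).choose (k - 2) - (n - k - 1).choose (k - 2) + 2 <
      4 * (n - 4).choose (k - 3) + (n - 4).choose (k - 4) := by
  obtain ⟨a, rfl⟩ : ∃ a, k = a + 4 := ⟨k - 4, by omega⟩
  obtain ⟨b, rfl⟩ : ∃ b, n = 2 * a + 8 + b := ⟨n - (2 * a + 8), by omega⟩
  have hb : b ≤ a + 1 := by omega
  -- rewrite all subtractions
  have e1 : 2 * a + 8 + b - 2 = (2 * a + b + 4) + 2 := by omega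
  have e2 : a + 4 - 2 = a + 2 := by omega
  have e3 : 2 * a + 8 + b - (a + 4) - 1 = a + b + 3 := by omega
  have e4 : 2 * a + 8 + b - 4 = 2 * a + b + 4 := by omega
  have e5 : a + 4 - 3 = a + 1 := by omega
  have e6 : a + 4 - 4 = a := by omega
  rw [e1, e2, e3, e4, e5, e6]
  set m := 2 * a + b + 4 with hm
  -- Pascal twice
  have pas : (m + 2).choose (a + 2)
      = m.choose (a + 2) + 2 * m.choose (a + 1) + m.choose a := by
    rw [show m + 2 = (m + 1) + 1 from rfl, Nat.choose_succ_succ (m+1) (a+1),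
      show a + 2 = (a + 1) + 1 from rfl]
    rw [Nat.choose_succ_succ m (a + 1), Nat.choose_succ_succ m a]
    ring
  -- ratio inequality: choose m (a+2) ≤ 2 * choose m (a+1)
  have ratio : m.choose (a + 2) * (a + 2) = m.choose (a + 1) * (a + b + 3) := by
    have := Nat.choose_succ_right_eq m (a + 1)
    rw [this]
    congr 1
    omega
  have hle : m.choose (a + 2) ≤ 2 * m.choose (a + 1) := by
    have h : m.choose (a + 2) * (a + 2) ≤ 2 * m.choose (a + 1) * (a + 2) := by
      rw [ratio]
      calc m.choose (a + 1) * (a + b + 3) ≤ m.choose (a + 1) * (2 * (a + 2)) :=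
            Nat.mul_le_mul_left _ (by omega)
        _ = 2 * m.choose (a + 1) * (a + 2) := by ring
    exact Nat.le_of_mul_le_mul_right h (by omega)
  -- lower bound for the subtracted term
  have hY : a + 3 ≤ (a + b + 3).choose (a + 2) := by
    calc a + 3 = (a + 3).choose (a + 2) := by
          rw [show a + 3 = (a + 2) + 1 from rfl, Nat.choose_succ_self_right]
      _ ≤ (a + b + 3).choose (a + 2) := Nat.choose_le_choose _ (by omega)
  have hP : 1 ≤ m.choose (a + 1) := Nat.choose_pos (by omega)
  omega
end

section
/- If k ≥ 9 and n ≥ 3k − 2, then C(n−2, k−2) − C(n−k−1, k−2) + 2 > 4·C(n−4, k−3) + C(n−4, k−4); that is, |A(n,k)| > |B(n,k)|. -/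
/-!
Write `r = k - 2` and `M = n - 4 ≥ 3r`. Expanding `C(M + 2, r)` by Pascal's rule, the claim follows
from `C(M - r + 1, r) + 2 C(M, r - 1) ≤ C(M, r)`. This holds with `s` in place of `r` for every
`1 ≤ s ≤ r`, by induction on `M`: by Pascal's rule the increment in `M` is the same inequality for
`s - 1`. At `M = 3r`, with `d = r - s`, it amounts to `(2s+3d+1) C(2r+1, s) ≤ (3d+1) C(3r, s)`, that
is, to the factorial inequality `(2s+2d+1)! (2s+3d+1)! ≤ (3d+1) (3s+3d)! (s+2d+1)!`. For `d ≥ 1` it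
follows by induction on `s` with `r = s + d` fixed, starting from an equality at `s = 0`; on the
diagonal `d = 0` it follows by induction on `s ≥ 7`, and it fails for `s = 6`.
-/

open Nat

theorem factorial_two_mul_add_one_mul_self_le {s : ℕ} (hs : 7 ≤ s) :
    (2 * s + 1)! * (2 * s + 1)! ≤ (3 * s)! * (s + 1)! := by
  induction s, hs using Nat.le_induction with
  | base => decide
  | succ s hs ih =>
    calc (2 * (s + 1) + 1)! * (2 * (s + 1) + 1)!
        = ((2 * s + 3) * (2 * s + 2)) ^ 2 * ((2 * s + 1)! * (2 * s + 1)!) := by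
          rw [show 2 * (s + 1) + 1 = 2 * s + 1 + 1 + 1 by ring]
          simp only [factorial_succ]
          ring
      _ ≤ ((2 * s + 3) * (2 * s + 2)) ^ 2 * ((3 * s)! * (s + 1)!) := by gcongr
      _ ≤ (3 * s + 3) * (3 * s + 2) * (3 * s + 1) * (s + 2) * ((3 * s)! * (s + 1)!) := by
          gcongr
          nlinarith
      _ = (3 * (s + 1))! * (s + 1 + 1)! := by
          rw [show 3 * (s + 1) = 3 * s + 1 + 1 + 1 by ring]
          simp only [factorial_succ]
          ring

theorem factorial_mul_factorial_le_of_pos : ∀ {s d : ℕ}, 0 < d → 7 ≤ s + d →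
    (2 * s + 2 * d + 1)! * (2 * s + 3 * d + 1)! ≤
      (3 * d + 1) * (3 * s + 3 * d)! * (s + 2 * d + 1)!
  | 0, d, _, _ => by
    simp only [mul_zero, zero_add, factorial_succ (3 * d)]
    exact le_of_eq (by ring)
  | s + 1, d, hd, h => by
    rcases (by omega : d = 1 ∧ 5 ≤ s ∧ s ≤ 6 ∨ 2 ≤ d ∨ 7 ≤ s) with ⟨rfl, hs⟩ | hsd
    · -- the ratio inequality `hpoly` below fails here, so these two cases are checked directly
      obtain rfl | rfl : s = 5 ∨ s = 6 := by omega
      all_goals decide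
    · have ih := factorial_mul_factorial_le_of_pos (s := s) (d := d + 1) (by omega) (by omega)
      rw [show 2 * s + 2 * (d + 1) + 1 = 2 * s + 2 * d + 3 by ring,
        show 2 * s + 3 * (d + 1) + 1 = 2 * s + 3 * d + 3 + 1 by ring,
        factorial_succ (2 * s + 3 * d + 3), show 3 * (d + 1) + 1 = 3 * d + 4 by ring,
        show 3 * s + 3 * (d + 1) = 3 * s + 3 * d + 3 by ring,
        show s + 2 * (d + 1) + 1 = s + 2 * d + 2 + 1 by ring, factorial_succ (s + 2 * d + 2)] at ih
      rw [show 2 * (s + 1) + 2 * d + 1 = 2 * s + 2 * d + 3 by ring,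
        show 2 * (s + 1) + 3 * d + 1 = 2 * s + 3 * d + 3 by ring,
        show 3 * (s + 1) + 3 * d = 3 * s + 3 * d + 3 by ring,
        show s + 1 + 2 * d + 1 = s + 2 * d + 2 by ring]
      have hpoly : (3 * d + 4) * (s + 2 * d + 3) ≤ (3 * d + 1) * (2 * s + 3 * d + 4) := by
        rcases hsd with hd2 | hs7 <;> nlinarith
      refine Nat.le_of_mul_le_mul_left (c := 2 * s + 3 * d + 4) ?_ (by omega)
      linarith [Nat.mul_le_mul_right ((3 * s + 3 * d + 3)! * (s + 2 * d + 2)!) hpoly]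

theorem factorial_mul_factorial_le {s d : ℕ} (h : 7 ≤ s + d) :
    (2 * s + 2 * d + 1)! * (2 * s + 3 * d + 1)! ≤
      (3 * d + 1) * (3 * s + 3 * d)! * (s + 2 * d + 1)! := by
  rcases Nat.eq_zero_or_pos d with rfl | hd
  · simpa using factorial_two_mul_add_one_mul_self_le (s := s) (by omega)
  · exact factorial_mul_factorial_le_of_pos hd h

theorem mul_choose_le_mul_choose {s d : ℕ} (h : 7 ≤ s + d) :
    (2 * s + 3 * d + 1) * (2 * s + 2 * d + 1).choose s ≤
      (3 * d + 1) * (3 * s + 3 * d).choose s := by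
  have h₁ : (2 * s + 2 * d + 1).choose s * s ! * (s + 2 * d + 1)! = (2 * s + 2 * d + 1)! := by
    rw [← choose_mul_factorial_mul_factorial (by omega : s ≤ 2 * s + 2 * d + 1),
      show 2 * s + 2 * d + 1 - s = s + 2 * d + 1 by omega]
  have h₂ : (3 * s + 3 * d).choose s * s ! * (2 * s + 3 * d)! = (3 * s + 3 * d)! := by
    rw [← choose_mul_factorial_mul_factorial (by omega : s ≤ 3 * s + 3 * d),
      show 3 * s + 3 * d - s = 2 * s + 3 * d by omega]
  set K := s ! * (s + 2 * d + 1)! * (2 * s + 3 * d)!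
  refine Nat.le_of_mul_le_mul_right (c := K) ?_ (by positivity)
  calc (2 * s + 3 * d + 1) * (2 * s + 2 * d + 1).choose s * K
      = (2 * s + 2 * d + 1)! * (2 * s + 3 * d + 1)! := by
        rw [factorial_succ (2 * s + 3 * d), ← h₁]
        ring
    _ ≤ (3 * d + 1) * (3 * s + 3 * d)! * (s + 2 * d + 1)! := factorial_mul_factorial_le h
    _ = (3 * d + 1) * (3 * s + 3 * d).choose s * K := by
        rw [← h₂]
        ring

theorem choose_add_two_mul_choose_le {r s : ℕ} (hr : 7 ≤ r) (hs : s + 1 ≤ r) :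
    (2 * r + 1).choose (s + 1) + 2 * (3 * r).choose s ≤ (3 * r).choose (s + 1) := by
  obtain ⟨d, rfl⟩ : ∃ d, r = s + 1 + d := ⟨r - s - 1, by omega⟩
  have hmul := mul_choose_le_mul_choose (s := s + 1) (d := d) (by omega)
  have hsucc := choose_succ_right_eq (3 * (s + 1 + d)) s
  rw [show 3 * (s + 1 + d) - s = 2 * s + 3 * d + 3 by omega] at hsucc
  rw [show 2 * (s + 1) + 2 * d + 1 = 2 * (s + 1 + d) + 1 by ring,
    show 3 * (s + 1) + 3 * d = 3 * (s + 1 + d) by ring] at hmul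
  refine Nat.le_of_mul_le_mul_left (c := 2 * s + 3 * d + 3) ?_ (by omega)
  linarith

theorem choose_add_two_mul_choose_le_add {r : ℕ} (hr : 7 ≤ r) (j : ℕ) :
    ∀ {s : ℕ}, s + 1 ≤ r →
      (2 * r + 1 + j).choose (s + 1) + 2 * (3 * r + j).choose s ≤ (3 * r + j).choose (s + 1) := by
  induction j with
  | zero => exact choose_add_two_mul_choose_le hr
  | succ j ih =>
    intro s hs
    rw [← add_assoc, ← add_assoc]
    cases s with
    | zero =>
      simp only [zero_add, choose_zero_right, choose_one_right]
      omega
    | succ s =>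
      rw [choose_succ_succ' _ (s + 1), choose_succ_succ' _ s,
        choose_succ_succ' (3 * r + j) (s + 1)]
      have ih₀ := ih (s := s) (by omega)
      have ih₁ := ih hs
      omega

theorem A_gt_B (n k : ℕ) (hk : 9 ≤ k) (hn : 3 * k - 2 ≤ n) :
    (n - 2).choose (k - 2) - (n - k - 1).choose (k - 2) + 2 >
      4 * (n - 4).choose (k - 3) + (n - 4).choose (k - 4) := by
  obtain ⟨s, rfl⟩ : ∃ s, k = s + 4 := ⟨k - 4, by omega⟩
  obtain ⟨j, rfl⟩ : ∃ j, n = 3 * (s + 2) + j + 4 := ⟨n - 3 * (s + 2) - 4, by omega⟩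
  have key := choose_add_two_mul_choose_le_add (r := s + 2) (by omega) j (s := s + 1) le_rfl
  rw [show 3 * (s + 2) + j + 4 - 2 = 3 * (s + 2) + j + 1 + 1 by omega,
    show 3 * (s + 2) + j + 4 - (s + 4) - 1 = 2 * (s + 2) + 1 + j by omega,
    show 3 * (s + 2) + j + 4 - 4 = 3 * (s + 2) + j by omega,
    show s + 4 - 2 = s + 1 + 1 by omega, show s + 4 - 3 = s + 1 by omega,
    show s + 4 - 4 = s by omega,
    choose_succ_succ' _ (s + 1), choose_succ_succ' _ s, choose_succ_succ' (3 * (s + 2) + j) (s + 1)]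
  omega
end

section
/- For every ε > 0 and every δ > 0 there exists a natural number n0 such that for all integers n and k with n > n0 and 1/2 + ε < k/n < 2/3 − ε, the family C(n,k) satisfies |C(n,k)| > (1 − δ)·C(n−1, k−1). -/
/-!
Every `k`-subset of `[n]` containing `1` whose trace on `[2,k]` has at least `⌈k/2⌉` elements
lies in `𝒞(n,k)`, so `C(n-1,k-1) - |𝒞(n,k)|` is at most a lower tail
`∑_{j < ⌈k/2⌉} C(k-1,j) C(n-k,k-1-j)` of a hypergeometric distribution. When `k/n > 1/2 + ε`
its terms grow by a factor `1 + ε` up to index `⌈k/2⌉ + s`, so the tail is at most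
`1/(ε (1+ε)^s)` times a single term, which Vandermonde's identity bounds by `C(n-1,k-1)`.
-/

/-- The family `𝒞(n,k)`: for even `k = 2l` it consists of the `k`-subsets `F` of
`[n]` with `1 ∈ F` and `|F ∩ [2,2l]| ≥ l`, together with the sets `[2,2l] ∪ {i}`
for `i ∈ [2l+1,n]`; for odd `k = 2l+1` it consists of the `k`-subsets `F` of `[n]`
with `1 ∈ F` and `|F ∩ [2,2l+2]| ≥ l+1`, together with the set `[2,2l+2]`. -/
def famC (n k : ℕ) : Finset (Finset ℕ) :=
  if k % 2 = 0 then
    ((Finset.Icc 1 n).powersetCard k).filter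
        (fun F => 1 ∈ F ∧ k / 2 ≤ (F ∩ Finset.Icc 2 k).card) ∪
      (Finset.Icc (k + 1) n).image (fun i => insert i (Finset.Icc 2 k))
  else
    ((Finset.Icc 1 n).powersetCard k).filter
        (fun F => 1 ∈ F ∧ (k + 1) / 2 ≤ (F ∩ Finset.Icc 2 (k + 1)).card) ∪
      {Finset.Icc 2 (k + 1)}

open Finset

section Growth

variable {g : ℕ → ℝ} {ρ : ℝ}

theorem sub_one_mul_sum_range_le {t : ℕ} (h0 : 0 ≤ g 0)
    (hg : ∀ j < t, ρ * g j ≤ g (j + 1)) : (ρ - 1) * ∑ j ∈ range t, g j ≤ g t := by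
  induction t with
  | zero => simpa using h0
  | succ t ih =>
    have := ih fun j hj => hg j (by omega)
    rw [sum_range_succ, mul_add]
    linarith [hg t t.lt_succ_self]

theorem pow_mul_le_of_forall_mul_le (hρ : 0 ≤ ρ) {t d : ℕ}
    (hg : ∀ j < t + d, ρ * g j ≤ g (j + 1)) : ρ ^ d * g t ≤ g (t + d) := by
  induction d with
  | zero => simp
  | succ d ih =>
    calc ρ ^ (d + 1) * g t = ρ * (ρ ^ d * g t) := by ring
      _ ≤ ρ * g (t + d) := mul_le_mul_of_nonneg_left (ih fun j hj => hg j (by omega)) hρ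
      _ ≤ g (t + (d + 1)) := hg (t + d) (by omega)

theorem sub_one_mul_pow_mul_sum_range_le (hρ : 0 ≤ ρ) (h0 : 0 ≤ g 0)
    {t s : ℕ} (hg : ∀ j < t + s, ρ * g j ≤ g (j + 1)) :
    (ρ - 1) * ρ ^ s * ∑ j ∈ range t, g j ≤ g (t + s) :=
  calc (ρ - 1) * ρ ^ s * ∑ j ∈ range t, g j = ρ ^ s * ((ρ - 1) * ∑ j ∈ range t, g j) := by ring
    _ ≤ ρ ^ s * g t := mul_le_mul_of_nonneg_left
        (sub_one_mul_sum_range_le h0 fun j hj => hg j (by omega)) (pow_nonneg hρ s)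
    _ ≤ g (t + s) := pow_mul_le_of_forall_mul_le hρ hg

end Growth

theorem choose_mul_choose_mul_eq (a b K j : ℕ) (hjK : j < K) :
    a.choose j * b.choose (K - j) * ((a - j) * (K - j)) =
      a.choose (j + 1) * b.choose (K - (j + 1)) * ((j + 1) * (b - (K - (j + 1)))) := by
  have ha := Nat.choose_succ_right_eq a j
  have hb := Nat.choose_succ_right_eq b (K - (j + 1))
  rw [show K - (j + 1) + 1 = K - j by omega] at hb
  calc _ = (a.choose j * (a - j)) * (b.choose (K - j) * (K - j)) := by ring
    _ = (a.choose (j + 1) * (j + 1)) * (b.choose (K - (j + 1)) * (b - (K - (j + 1)))) := by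
        rw [ha, hb]
    _ = _ := by ring

theorem mul_choose_mul_choose_le_succ {ρ : ℝ} {a b K j : ℕ} (hja : j < a) (hjK : j < K)
    (h : ρ * (((j + 1) * (b - (K - (j + 1))) : ℕ) : ℝ) ≤ ((a - j) * (K - j) : ℕ)) :
    ρ * (a.choose j * b.choose (K - j) : ℕ) ≤ (a.choose (j + 1) * b.choose (K - (j + 1)) : ℕ) := by
  have hpos : (0 : ℝ) < ((a - j) * (K - j) : ℕ) := by
    exact_mod_cast Nat.mul_pos (by omega) (by omega)
  have heq := congrArg (Nat.cast : ℕ → ℝ) (choose_mul_choose_mul_eq a b K j hjK)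
  push_cast at heq
  refine le_of_mul_le_mul_right ?_ hpos
  push_cast at h hpos ⊢
  calc ρ * (a.choose j * b.choose (K - j)) * ((a - j : ℕ) * (K - j : ℕ))
      = a.choose (j + 1) * b.choose (K - (j + 1)) * (ρ * ((j + 1) * (b - (K - (j + 1)) : ℕ))) := by
        linear_combination ρ * heq
    _ ≤ a.choose (j + 1) * b.choose (K - (j + 1)) * ((a - j : ℕ) * (K - j : ℕ)) :=
        mul_le_mul_of_nonneg_left h (by positivity)

theorem mul_choose_mul_choose_le_succ_of_lt {ρ : ℝ} (hρ : 0 ≤ ρ) {a b K m : ℕ} (hma : m ≤ a)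
    (hmK : m ≤ K) (h : ρ * ((m * (b - (K - m)) : ℕ) : ℝ) ≤ ((a + 1 - m) * (K + 1 - m) : ℕ)) :
    ∀ j < m, ρ * (a.choose j * b.choose (K - j) : ℕ) ≤
      (a.choose (j + 1) * b.choose (K - (j + 1)) : ℕ) := by
  intro j hj
  refine mul_choose_mul_choose_le_succ (by omega) (by omega) ?_
  have hlhs : (j + 1) * (b - (K - (j + 1))) ≤ m * (b - (K - m)) :=
    Nat.mul_le_mul (by omega) (by omega)
  have hrhs : (a + 1 - m) * (K + 1 - m) ≤ (a - j) * (K - j) :=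
    Nat.mul_le_mul (by omega) (by omega)
  calc ρ * (((j + 1) * (b - (K - (j + 1))) : ℕ) : ℝ) ≤ ρ * ((m * (b - (K - m)) : ℕ) : ℝ) := by
        gcongr
    _ ≤ ((a + 1 - m) * (K + 1 - m) : ℕ) := h
    _ ≤ ((a - j) * (K - j) : ℕ) := by exact_mod_cast hrhs

theorem choose_mul_choose_le_add_choose (a b : ℕ) {K j : ℕ} (hj : j ≤ K) :
    a.choose j * b.choose (K - j) ≤ (a + b).choose K := by
  rw [Nat.add_choose_eq]
  exact single_le_sum (f := fun p : ℕ × ℕ => a.choose p.1 * b.choose p.2)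
    (fun _ _ => Nat.zero_le _) (a := (j, K - j))
    (mem_antidiagonal.2 (Nat.add_sub_cancel' hj))

-- The ratio of consecutive terms `C(k-1,j) C(n-k,k-1-j)` at `j = m - 1` is at least `1 + ε`.
theorem one_add_mul_mul_le_sq {ε c n k m : ℝ} (hε : 0 < ε) (hc : 0 ≤ c)
    (hnk : (1 / 2 + ε) * n < k) (hkn : k ≤ n) (hεk : 4 * c + 3 ≤ ε * k) (hm0 : 0 ≤ m)
    (hm : m ≤ k / 2 + c) : (1 + ε) * (m * (n - 2 * k + 1 + m)) ≤ (k - m) ^ 2 := by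
  have hxc : c ≤ k / 2 - c := by nlinarith
  have hsq : (k / 2 - c) ^ 2 ≤ (k - m) ^ 2 := by
    apply pow_le_pow_left₀ <;> linarith
  rcases lt_or_ge (n - 2 * k + 1 + m) 0 with hP | hP
  · have : m * (n - 2 * k + 1 + m) ≤ 0 := mul_nonpos_of_nonneg_of_nonpos hm0 hP.le
    nlinarith [sq_nonneg (k - m)]
  have hP' : n - 2 * k + 1 + m ≤ k / 2 - 2 * ε * k + c + 1 := by nlinarith
  calc (1 + ε) * (m * (n - 2 * k + 1 + m))
      ≤ (k / 2 + c) * ((1 + ε) * (k / 2 - 2 * ε * k + c + 1)) := by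
        rw [mul_left_comm]
        apply mul_le_mul hm (mul_le_mul_of_nonneg_left hP' (by linarith)) (by positivity)
          (by linarith)
    _ ≤ (k / 2 + c) * (k / 2 - 3 / 2 * ε * k + 2 * c + 2) := by
        apply mul_le_mul_of_nonneg_left _ (by linarith)
        nlinarith
    _ ≤ (k / 2 - c) ^ 2 := by nlinarith
    _ ≤ (k - m) ^ 2 := hsq

section

variable {α : Type*} [DecidableEq α]

theorem card_filter_card_inter_eq_le (s A : Finset α) (K j : ℕ) :
    #{S ∈ s.powersetCard K | #(S ∩ A) = j} ≤
      (#(s ∩ A)).choose j * (#(s \ A)).choose (K - j) := by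
  rw [← card_powersetCard, ← card_powersetCard, ← card_product]
  refine card_le_card_of_injOn (fun S => (S ∩ A, S \ A)) ?_ ?_
  · intro S hS
    simp only [coe_filter, mem_powersetCard, Set.mem_ofPred_eq] at hS
    obtain ⟨⟨hSs, hSK⟩, hSA⟩ := hS
    simp only [coe_product, Set.mem_prod, mem_coe, mem_powersetCard]
    refine ⟨⟨inter_subset_inter_right hSs, hSA⟩, sdiff_subset_sdiff hSs le_rfl, ?_⟩
    rw [card_sdiff, inter_comm, hSA, hSK]
  · intro S _ S' _ h
    simp only [Prod.mk.injEq] at h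
    rw [← sdiff_union_inter S A, ← sdiff_union_inter S' A, h.1, h.2]

theorem card_filter_card_inter_lt_le (s A : Finset α) (K t : ℕ) :
    #{S ∈ s.powersetCard K | #(S ∩ A) < t} ≤
      ∑ j ∈ range t, (#(s ∩ A)).choose j * (#(s \ A)).choose (K - j) := by
  calc #{S ∈ s.powersetCard K | #(S ∩ A) < t}
      ≤ #((range t).biUnion fun j => {S ∈ s.powersetCard K | #(S ∩ A) = j}) := by
        refine card_le_card fun S hS => ?_
        simp only [mem_filter] at hS
        simp only [mem_biUnion, mem_range, mem_filter]
        exact ⟨_, hS.2, hS.1, rfl⟩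
    _ ≤ ∑ j ∈ range t, #{S ∈ s.powersetCard K | #(S ∩ A) = j} := card_biUnion_le
    _ ≤ _ := sum_le_sum fun j _ => card_filter_card_inter_eq_le s A K j

end

-- For odd `k` the window `[2,k]` is narrower than the `[2,k+1]` used by `famC`.
theorem card_filter_le_card_famC {n k : ℕ} (hn : 1 ≤ n) (hk : 1 ≤ k) :
    #{S ∈ (Icc 2 n).powersetCard (k - 1) | (k + 1) / 2 ≤ #(S ∩ Icc 2 k)} ≤ #(famC n k) := by
  refine card_le_card_of_injOn (insert 1) ?_ ?_
  · intro S hS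
    simp only [coe_filter, mem_powersetCard, Set.mem_ofPred_eq] at hS
    obtain ⟨⟨hSn, hSk⟩, hSA⟩ := hS
    have h1 : 1 ∉ S := fun h => by simpa using hSn h
    have hsub : insert 1 S ∈ (Icc 1 n).powersetCard k := by
      rw [mem_powersetCard, card_insert_of_notMem h1, hSk, Nat.sub_add_cancel hk]
      refine ⟨insert_subset (by simp; omega) (hSn.trans (Icc_subset_Icc_left (by norm_num))), rfl⟩
    have hmono : ∀ T, k ≤ T → (k + 1) / 2 ≤ #(insert 1 S ∩ Icc 2 T) := fun T hT =>
      hSA.trans (card_le_card (inter_subset_inter (subset_insert 1 S) (Icc_subset_Icc_right hT)))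
    rw [mem_coe, famC]
    split_ifs with hpar
    · exact mem_union_left _ (mem_filter.2 ⟨hsub, mem_insert_self 1 S, by
        simpa [show k / 2 = (k + 1) / 2 by omega] using hmono k le_rfl⟩)
    · exact mem_union_left _ (mem_filter.2 ⟨hsub, mem_insert_self 1 S, hmono (k + 1) (by omega)⟩)
  · intro S hS S' hS' h
    have h1 : ∀ S ∈ ((Icc 2 n).powersetCard (k - 1)).filter (fun S => (k + 1) / 2 ≤ #(S ∩ Icc 2 k)),
        S = (insert 1 S).erase 1 := fun S hS =>
      (erase_insert fun h => by simpa using (mem_powersetCard.1 (mem_filter.1 hS).1).1 h).symm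
    rw [h1 S hS, h1 S' hS', h]

theorem choose_le_card_famC_add_sum {n k : ℕ} (hk : 1 ≤ k) (hkn : k ≤ n) :
    (n - 1).choose (k - 1) ≤
      #(famC n k) + ∑ j ∈ range ((k + 1) / 2), (k - 1).choose j * (n - k).choose (k - 1 - j) := by
  have hinter : #(Icc 2 n ∩ Icc 2 k) = k - 1 := by
    rw [inter_eq_right.2 (Icc_subset_Icc_right hkn), Nat.card_Icc]; omega
  have hsdiff : #(Icc 2 n \ Icc 2 k) = n - k := by
    rw [card_sdiff, inter_eq_left.2 (Icc_subset_Icc_right hkn), Nat.card_Icc, Nat.card_Icc]; omega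
  have hbad := card_filter_card_inter_lt_le (Icc 2 n) (Icc 2 k) (k - 1) ((k + 1) / 2)
  rw [hinter, hsdiff] at hbad
  have hsplit := card_filter_add_card_filter_not (s := (Icc 2 n).powersetCard (k - 1))
    (p := fun S => (k + 1) / 2 ≤ #(S ∩ Icc 2 k))
  rw [card_powersetCard, Nat.card_Icc, show n + 1 - 2 = n - 1 by omega] at hsplit
  simp only [not_le] at hsplit
  have := card_filter_le_card_famC (n := n) (by omega) hk
  omega

theorem mul_pow_mul_sum_choose_mul_choose_le {ε : ℝ} (hε : 0 < ε) {s n k : ℕ}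
    (hnk : (1 / 2 + ε) * n < k) (hkn : 3 * k ≤ 2 * n) (hεk : 4 * s + 5 ≤ ε * k) :
    ε * (1 + ε) ^ s *
        ∑ j ∈ range ((k + 1) / 2), (((k - 1).choose j * (n - k).choose (k - 1 - j) : ℕ) : ℝ) ≤
      ((n - 1).choose (k - 1) : ℝ) := by
  set t := (k + 1) / 2
  have hkR : (k : ℝ) ≤ n := by exact_mod_cast (by omega : k ≤ n)
  have hks : 4 * s + 5 ≤ k := by
    have : (4 * s + 5 : ℝ) ≤ k := by nlinarith
    exact_mod_cast this
  have hmR : ((t + s : ℕ) : ℝ) ≤ k / 2 + (s + 1 / 2) := by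
    have : ((2 * (t + s) : ℕ) : ℝ) ≤ ((k + 1 + 2 * s : ℕ) : ℝ) := by
      exact_mod_cast (by omega : 2 * (t + s) ≤ k + 1 + 2 * s)
    push_cast at this ⊢
    linarith
  have hratio : (1 + ε) * (((t + s) * (n - k - (k - 1 - (t + s))) : ℕ) : ℝ) ≤
      ((k - 1 + 1 - (t + s)) * (k - 1 + 1 - (t + s)) : ℕ) := by
    have e1 : ((n - k - (k - 1 - (t + s)) : ℕ) : ℝ) = n - 2 * k + 1 + (t + s : ℕ) := by
      have := congrArg (Nat.cast : ℕ → ℝ)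
        (show n - k - (k - 1 - (t + s)) + 2 * k = n + 1 + (t + s) by omega)
      push_cast at this ⊢
      linarith
    have e2 : ((k - 1 + 1 - (t + s) : ℕ) : ℝ) = k - (t + s : ℕ) := by
      rw [Nat.cast_sub (by omega), Nat.sub_add_cancel (by omega)]
    rw [Nat.cast_mul, Nat.cast_mul, e1, e2, ← sq]
    exact one_add_mul_mul_le_sq hε (by positivity) hnk hkR (by linarith) (Nat.cast_nonneg _) hmR
  have hgrowth :=
    mul_choose_mul_choose_le_succ_of_lt (by positivity) (by omega) (by omega) hratio
  have hsum := sub_one_mul_pow_mul_sum_range_le (ρ := 1 + ε)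
    (g := fun j => (((k - 1).choose j * (n - k).choose (k - 1 - j) : ℕ) : ℝ)) (by positivity)
    (Nat.cast_nonneg _) hgrowth
  rw [add_sub_cancel_left] at hsum
  refine hsum.trans ?_
  have := choose_mul_choose_le_add_choose (k - 1) (n - k) (show t + s ≤ k - 1 by omega)
  rw [show k - 1 + (n - k) = n - 1 by omega] at this
  exact_mod_cast this

theorem famC_card_lower_bound :
    ∀ ε δ : ℝ, 0 < ε → 0 < δ → ∃ n0 : ℕ, ∀ n k : ℕ, n0 < n →
      1 / 2 + ε < (k : ℝ) / n → (k : ℝ) / n < 2 / 3 - ε →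
      ((famC n k).card : ℝ) > (1 - δ) * ((n - 1).choose (k - 1) : ℝ) := by
  intro ε δ hε hδ
  obtain ⟨s, hs⟩ := pow_unbounded_of_one_lt (2 / (ε * δ)) (lt_add_of_pos_right 1 hε)
  refine ⟨⌈(8 * s + 10) / ε⌉₊, fun n k hn hlow hup => ?_⟩
  have hnR : (0 : ℝ) < n := Nat.cast_pos.2 (by omega)
  rw [lt_div_iff₀ hnR] at hlow
  rw [div_lt_iff₀ hnR] at hup
  have hεn : 8 * s + 10 ≤ ε * n :=
    (div_le_iff₀' hε).1 ((Nat.le_ceil _).trans (by exact_mod_cast hn.le))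
  have hkn : 3 * k ≤ 2 * n := by exact_mod_cast (by nlinarith : (3 * k : ℝ) ≤ 2 * n)
  have hεk : 4 * s + 5 ≤ ε * k := by nlinarith
  have hk : 1 ≤ k := by exact_mod_cast (by nlinarith : (1 : ℝ) ≤ k)
  have hcount : ((n - 1).choose (k - 1) : ℝ) ≤ #(famC n k) +
      ∑ j ∈ range ((k + 1) / 2), (((k - 1).choose j * (n - k).choose (k - 1 - j) : ℕ) : ℝ) := by
    exact_mod_cast choose_le_card_famC_add_sum hk (by omega)
  set bad := ∑ j ∈ range ((k + 1) / 2), (((k - 1).choose j * (n - k).choose (k - 1 - j) : ℕ) : ℝ)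
  have htail : ε * (1 + ε) ^ s * bad ≤ (n - 1).choose (k - 1) :=
    mul_pow_mul_sum_choose_mul_choose_le hε hlow hkn hεk
  have hpow : 2 < ε * δ * (1 + ε) ^ s := by rwa [div_lt_iff₀ (by positivity), mul_comm] at hs
  have hbad : 2 * bad ≤ δ * (n - 1).choose (k - 1) := by
    have : 0 ≤ bad := by positivity
    nlinarith
  have hC : (0 : ℝ) < (n - 1).choose (k - 1) := Nat.cast_pos.2 (Nat.choose_pos (by omega))
  linarith [mul_pos hδ hC]
end
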